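/- The periodic schedule |121213212123| (i.e., S(t) = 1 if t ≡ 0, 2, 4, 7, 9 (mod 12), S(t) = 2 if t ≡ 1, 3, 6, 8, 10 (mod 12), and S(t) = 3 if t ≡ 5, 11 (mod 12)) is valid for the real-valued pinwheel instance (12/5, 12/5, 6). -/

import Mathlib

/-- A schedule `S : ℤ → Fin k` is valid for the real-valued pinwheel instance
`a : Fin k → ℝ` if for every task `i`, every positive integer `l`, and every
integer `m`, task `i` is performed at least `l` times on the days
`t ∈ [m, m + ⌈l * a i⌉)`. -/
def PinValid {k : ℕ} (a : Fin k → ℝ) (S : ℤ → Fin k) : Prop :=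
  ∀ i : Fin k, ∀ l : ℕ, 0 < l → ∀ m : ℤ,
    (l : ℕ) ≤ ((Finset.Ico m (m + ⌈(l : ℝ) * a i⌉)).filter (fun t => S t = i)).card

/-- A real-valued pinwheel instance is schedulable if some schedule is valid for it. -/
def PinSchedulable {k : ℕ} (a : Fin k → ℝ) : Prop := ∃ S : ℤ → Fin k, PinValid a S

/-- The periodic schedule `|121213212123|`. -/
def S121213212123 : ℤ → Fin 3 := fun t =>
  if t % 12 = 5 ∨ t % 12 = 11 then 2
  else if t % 12 = 1 ∨ t % 12 = 3 ∨ t % 12 = 6 ∨ t % 12 = 8 ∨ t % 12 = 10 then 1 else 0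

namespace PinAux

noncomputable def cnt (i : Fin 3) (m n : ℤ) : ℕ :=
  ((Finset.Ico m (m + n)).filter (fun t => S121213212123 t = i)).card

lemma S_add_12 (t : ℤ) : S121213212123 (t + 12) = S121213212123 t := by
  unfold S121213212123
  have h : (t + 12) % 12 = t % 12 := by omega
  rw [h]

lemma cnt_shift (i : Fin 3) (m n : ℤ) : cnt i (m + 12) n = cnt i m n := by
  unfold cnt
  rw [show m + 12 + n = (m + n) + 12 by ring,
    ← Finset.map_add_right_Ico m (m + n) 12, Finset.filter_map, Finset.card_map]
  congr 1
  ext t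
  simp [S_add_12]

lemma cnt_mod (i : Fin 3) (m n : ℤ) : cnt i m n = cnt i (m % 12) n := by
  have key : ∀ q : ℤ, cnt i (m % 12 + 12 * q) n = cnt i (m % 12) n := by
    intro q
    induction q using Int.induction_on with
    | zero => norm_num
    | succ k ih => rw [show m % 12 + 12 * (k + 1) = (m % 12 + 12 * k) + 12 by ring, cnt_shift, ih]
    | pred k ih =>
      have h := cnt_shift i (m % 12 + 12 * (-(k:ℤ) - 1)) n
      rw [show m % 12 + 12 * (-(k:ℤ) - 1) + 12 = m % 12 + 12 * (-(k:ℤ)) by ring] at h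
      rw [h] at ih
      exact ih
  have h : m = m % 12 + 12 * (m / 12) := by omega
  conv_lhs => rw [h]
  rw [key]

lemma cnt_split (i : Fin 3) (m n : ℤ) (hn : 0 ≤ n) :
    cnt i m (n + 12) = cnt i m n + cnt i (m + n) 12 := by
  unfold cnt
  rw [show m + (n + 12) = (m + n) + 12 by ring,
    ← Finset.Ico_union_Ico_eq_Ico (le_add_of_nonneg_right hn)
      (by linarith : m + n ≤ m + n + 12),
    Finset.filter_union, Finset.card_union_of_disjoint]
  exact Finset.disjoint_filter_filter (Finset.Ico_disjoint_Ico_consecutive m (m + n) (m + n + 12))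

lemma base_cnt (i : Fin 3) (w : ℤ) (r : ℕ)
    (h : ∀ s : ℤ, 0 ≤ s → s < 12 → r ≤ cnt i s w) (m : ℤ) : r ≤ cnt i m w := by
  rw [cnt_mod]
  exact h _ (Int.emod_nonneg m (by norm_num)) (Int.emod_lt_of_pos m (by norm_num))

lemma cnt_period (i : Fin 3) (m : ℤ) : (if i = 2 then 2 else 5) ≤ cnt i m 12 := by
  apply base_cnt
  intro s h1 h2
  fin_cases i <;> interval_cases s <;> decide

lemma gen (i : Fin 3) (a : ℝ) (p : ℕ) (hp : 0 < p) (ha0 : 0 ≤ a) (hpa : (p : ℝ) * a = 12)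
    (hper : ∀ m : ℤ, p ≤ cnt i m 12)
    (hbase : ∀ r : ℕ, r < p → ∀ m : ℤ, r ≤ cnt i m ⌈(r : ℝ) * a⌉)
    (l : ℕ) (m : ℤ) : l ≤ cnt i m ⌈(l : ℝ) * a⌉ := by
  induction l using Nat.strong_induction_on generalizing m with
  | _ l ih =>
    by_cases hl : l < p
    · exact hbase l hl m
    · push_neg at hl
      have h1 : ((l - p : ℕ) : ℝ) * a + 12 = (l : ℝ) * a := by
        rw [Nat.cast_sub hl, sub_mul, ← hpa]; ring
      have h2 : ⌈(l : ℝ) * a⌉ = ⌈((l - p : ℕ) : ℝ) * a⌉ + 12 := by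
        rw [← h1, show (12 : ℝ) = ((12 : ℤ) : ℝ) by norm_num, Int.ceil_add_intCast]
      have hnn : 0 ≤ ⌈((l - p : ℕ) : ℝ) * a⌉ :=
        Int.ceil_nonneg (mul_nonneg (Nat.cast_nonneg _) ha0)
      rw [h2, cnt_split i m _ hnn]
      have hA := ih (l - p) (by omega) m
      have hB := hper (m + ⌈((l - p : ℕ) : ℝ) * a⌉)
      omega

lemma key (i : Fin 3) (l : ℕ) (m : ℤ) :
    l ≤ cnt i m ⌈(l : ℝ) * (![(12 : ℝ) / 5, 12 / 5, 6]) i⌉ := by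
  fin_cases i
  · simp only [Matrix.cons_val_zero]
    apply gen 0 (12/5) 5 (by norm_num) (by norm_num) (by norm_num)
      (fun m => by simpa using cnt_period 0 m)
    intro r hr m
    interval_cases r
    · simp [Int.ceil_nonneg]
    · rw [show ⌈((1:ℕ):ℝ) * (12/5)⌉ = 3 by norm_num [Int.ceil_eq_iff]]
      exact base_cnt 0 3 1 (by intro s h1 h2; interval_cases s <;> decide) m
    · rw [show ⌈((2:ℕ):ℝ) * (12/5)⌉ = 5 by norm_num [Int.ceil_eq_iff]]
      exact base_cnt 0 5 2 (by intro s h1 h2; interval_cases s <;> decide) m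
    · rw [show ⌈((3:ℕ):ℝ) * (12/5)⌉ = 8 by norm_num [Int.ceil_eq_iff]]
      exact base_cnt 0 8 3 (by intro s h1 h2; interval_cases s <;> decide) m
    · rw [show ⌈((4:ℕ):ℝ) * (12/5)⌉ = 10 by norm_num [Int.ceil_eq_iff]]
      exact base_cnt 0 10 4 (by intro s h1 h2; interval_cases s <;> decide) m
  · simp only [Matrix.cons_val_one, Matrix.head_cons]
    apply gen 1 (12/5) 5 (by norm_num) (by norm_num) (by norm_num)
      (fun m => by simpa using cnt_period 1 m)
    intro r hr m
    interval_cases r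
    · simp [Int.ceil_nonneg]
    · rw [show ⌈((1:ℕ):ℝ) * (12/5)⌉ = 3 by norm_num [Int.ceil_eq_iff]]
      exact base_cnt 1 3 1 (by intro s h1 h2; interval_cases s <;> decide) m
    · rw [show ⌈((2:ℕ):ℝ) * (12/5)⌉ = 5 by norm_num [Int.ceil_eq_iff]]
      exact base_cnt 1 5 2 (by intro s h1 h2; interval_cases s <;> decide) m
    · rw [show ⌈((3:ℕ):ℝ) * (12/5)⌉ = 8 by norm_num [Int.ceil_eq_iff]]
      exact base_cnt 1 8 3 (by intro s h1 h2; interval_cases s <;> decide) m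
    · rw [show ⌈((4:ℕ):ℝ) * (12/5)⌉ = 10 by norm_num [Int.ceil_eq_iff]]
      exact base_cnt 1 10 4 (by intro s h1 h2; interval_cases s <;> decide) m
  · simp only [Matrix.cons_val_two, Matrix.tail_cons, Matrix.head_cons]
    apply gen 2 6 2 (by norm_num) (by norm_num) (by norm_num)
      (fun m => by simpa using cnt_period 2 m)
    intro r hr m
    interval_cases r
    · simp [Int.ceil_nonneg]
    · rw [show ⌈((1:ℕ):ℝ) * 6⌉ = 6 by norm_num [Int.ceil_eq_iff]]
      exact base_cnt 2 6 1 (by intro s h1 h2; interval_cases s <;> decide) m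

end PinAux

theorem valid_121213212123 :
    PinValid ![(12 : ℝ) / 5, 12 / 5, 6] S121213212123 := by
  intro i l _ m
  exact PinAux.key i l m
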